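/- In the ordinal line framework, suppose the mechanism (ρ, W) has distortion strictly smaller than 7, i.e., max(SW(I,P,0), SW(I,P,1)) < 7·SW(I,P, win(I)) for every instance I and every placement P. Then for every integer ℓ ≥ 1, W applied to the multiset consisting of ℓ copies of 0 and ℓ+1 copies of 1 equals 1 (alternative 1 must win whenever ℓ groups are represented by 0 and ℓ+1 groups are represented by 1). -/
import Mathlib


/-! Ordinal line framework: the two alternatives are the reals 0 and 1.  Every group has
total agent mass 1 and is summarized by the fraction `x ∈ [0,1]` of its mass that ranks
alternative 0 farthest; an instance is a finite nonempty multiset of fractions, modelled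
as `frac : Fin n → ℝ` with `n > 0`.  A placement assigns to the occurrence `j` positions
`pa j ≥ 1/2` (the mass preferring 0) and `pb j ≤ 1/2` (the mass preferring 1). -/

/-- Social welfare of alternative `z` in the instance `frac` under placement `(pa, pb)`. -/
noncomputable def swOrd {n : ℕ} (frac pa pb : Fin n → ℝ) (z : ℝ) : ℝ :=
  ∑ j, (frac j * |pa j - z| + (1 - frac j) * |pb j - z|)

/-- Winner of the instance `frac` under the mechanism `(ρ, W)`: `W` applied to the
multiset of group representatives. -/
noncomputable def winOrd (ρ : ℝ → ℝ) (W : Multiset ℝ → ℝ) {n : ℕ}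
    (frac : Fin n → ℝ) : ℝ :=
  W (Multiset.map (fun j => ρ (frac j)) Finset.univ.val)

/-- A valid placement: fractions lie in `[0,1]`, the mass preferring 0 is at positions
`≥ 1/2`, and the mass preferring 1 is at positions `≤ 1/2`. -/
def ValidPlacementOrd {n : ℕ} (frac pa pb : Fin n → ℝ) : Prop :=
  (∀ j, 0 ≤ frac j ∧ frac j ≤ 1) ∧ (∀ j, 1 / 2 ≤ pa j) ∧ (∀ j, pb j ≤ 1 / 2)

/-- A valid ordinal distributed mechanism: `ρ` assigns to every fraction a representative
in `{0,1}`, and `W` assigns to every finite nonempty multiset of representatives in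
`{0,1}` a winner occurring in it. -/
def ValidMechOrd (ρ : ℝ → ℝ) (W : Multiset ℝ → ℝ) : Prop :=
  (∀ x : ℝ, 0 ≤ x → x ≤ 1 → ρ x = 0 ∨ ρ x = 1) ∧
  (∀ m : Multiset ℝ, m ≠ 0 → (∀ q ∈ m, q = 0 ∨ q = 1) → W m ∈ m)


lemma mapIteUniv (a b : ℕ) (x y : ℝ) :
    (Multiset.map (fun j : Fin (a+b) => if (j:ℕ) < a then x else y) Finset.univ.val)
      = Multiset.replicate a x + Multiset.replicate b y := by
  have h : (Finset.univ : Finset (Fin (a+b))).val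
      = Multiset.map finSumFinEquiv (Finset.univ : Finset (Fin a ⊕ Fin b)).val := by
    have := congr_arg Finset.val (Finset.map_univ_equiv (finSumFinEquiv : Fin a ⊕ Fin b ≃ Fin (a+b)))
    rw [Finset.map_val] at this
    exact this.symm
  rw [h, Multiset.map_map]
  have huniv : (Finset.univ : Finset (Fin a ⊕ Fin b)).val
      = Multiset.map Sum.inl (Finset.univ : Finset (Fin a)).val
        + Multiset.map Sum.inr (Finset.univ : Finset (Fin b)).val := rfl
  rw [huniv, Multiset.map_add, Multiset.map_map, Multiset.map_map]
  congr 1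
  · have h2 : Multiset.map (((fun j : Fin (a+b) => if (j:ℕ) < a then x else y) ∘ finSumFinEquiv) ∘ Sum.inl)
        (Finset.univ : Finset (Fin a)).val = Multiset.map (fun _ => x) (Finset.univ : Finset (Fin a)).val :=
      Multiset.map_congr rfl (fun i _ => by simp [finSumFinEquiv, i.isLt])
    rw [h2, Multiset.map_const']
    simp
  · have h2 : Multiset.map (((fun j : Fin (a+b) => if (j:ℕ) < a then x else y) ∘ finSumFinEquiv) ∘ Sum.inr)
        (Finset.univ : Finset (Fin b)).val = Multiset.map (fun _ => y) (Finset.univ : Finset (Fin b)).val :=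
      Multiset.map_congr rfl (fun i _ => by simp [finSumFinEquiv])
    rw [h2, Multiset.map_const']
    simp

lemma sumIteFin (a b : ℕ) (A B : ℝ) :
    ∑ j : Fin (a+b), (if (j:ℕ) < a then A else B) = a * A + b * B := by
  rw [← finSumFinEquiv.sum_comp, Fintype.sum_sum_type]
  simp [finSumFinEquiv]

section Core
variable (ρ : ℝ → ℝ) (W : Multiset ℝ → ℝ)

/-- Social-welfare evaluation of the two-block instance. -/
lemma swEval (a b : ℕ) (u v qa qb : ℝ) (z : ℝ) :
    swOrd (fun j : Fin (a+b) => if (j:ℕ) < a then u else v)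
      (fun _ => qa) (fun _ => qb) z
    = a * (u * |qa - z| + (1-u) * |qb - z|) + b * (v * |qa - z| + (1-v) * |qb - z|) := by
  unfold swOrd
  rw [Finset.sum_congr rfl (fun j _ => ?_), sumIteFin]
  by_cases hj : (j:ℕ) < a <;> simp [hj]

lemma winEval (a b : ℕ) (u v : ℝ) :
    winOrd ρ W (fun j : Fin (a+b) => if (j:ℕ) < a then u else v)
      = W (Multiset.replicate a (ρ u) + Multiset.replicate b (ρ v)) := by
  unfold winOrd
  congr 1
  have h : (fun j : Fin (a+b) => ρ (if (j:ℕ) < a then u else v))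
      = fun j : Fin (a+b) => if (j:ℕ) < a then ρ u else ρ v := by
    funext j; exact apply_ite ρ _ _ _
  rw [h, mapIteUniv]

variable (hdist : ∀ (n : ℕ), 0 < n → ∀ frac pa pb : Fin n → ℝ,
      ValidPlacementOrd frac pa pb →
      max (swOrd frac pa pb 0) (swOrd frac pa pb 1) <
        7 * swOrd frac pa pb (winOrd ρ W frac))

include hdist in
lemma D0 (a b : ℕ) (hab : 0 < a + b) (u v : ℝ)
    (hu0 : 0 ≤ u) (hu1 : u ≤ 1) (hv0 : 0 ≤ v) (hv1 : v ≤ 1)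
    (hw : W (Multiset.replicate a (ρ u) + Multiset.replicate b (ρ v)) = 0) :
    (a:ℝ) * (1 - 4*u) + b * (1 - 4*v) < 0 := by
  have key := hdist (a+b) hab
    (fun j : Fin (a+b) => if (j:ℕ) < a then u else v) (fun _ => 1/2) (fun _ => 0)
    ⟨fun j => by by_cases hj : (j:ℕ) < a <;> simp [hj] <;> constructor <;> assumption,
     fun j => le_refl _, fun j => by norm_num⟩
  rw [winEval ρ W, hw] at key; simp only [swEval] at key
  have h0 : |((1:ℝ)/2) - 0| = 1/2 := by norm_num
  have h1 : |((0:ℝ)) - 0| = 0 := by norm_num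
  have h2 : |((1:ℝ)/2) - 1| = 1/2 := by rw [abs_of_nonpos] <;> norm_num
  have h3 : |((0:ℝ)) - 1| = 1 := by rw [abs_of_nonpos] <;> norm_num
  rw [h0, h1, h2, h3] at key
  have hle := le_max_right
    ((a:ℝ) * (u * (1/2) + (1-u) * 0) + b * (v * (1/2) + (1-v) * 0))
    ((a:ℝ) * (u * (1/2) + (1-u) * 1) + b * (v * (1/2) + (1-v) * 1))
  have := lt_of_le_of_lt hle key
  nlinarith [this]

include hdist in
lemma D1 (a b : ℕ) (hab : 0 < a + b) (u v : ℝ)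
    (hu0 : 0 ≤ u) (hu1 : u ≤ 1) (hv0 : 0 ≤ v) (hv1 : v ≤ 1)
    (hw : W (Multiset.replicate a (ρ u) + Multiset.replicate b (ρ v)) = 1) :
    (a:ℝ) * (4*u - 3) + b * (4*v - 3) < 0 := by
  have key := hdist (a+b) hab
    (fun j : Fin (a+b) => if (j:ℕ) < a then u else v) (fun _ => 1) (fun _ => 1/2)
    ⟨fun j => by by_cases hj : (j:ℕ) < a <;> simp [hj] <;> constructor <;> assumption,
     fun j => by norm_num, fun j => le_refl _⟩
  rw [winEval ρ W, hw] at key; simp only [swEval] at key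
  have h0 : |((1:ℝ)) - 0| = 1 := by norm_num
  have h1 : |((1:ℝ)/2) - 0| = 1/2 := by norm_num
  have h2 : |((1:ℝ)) - 1| = 0 := by norm_num
  have h3 : |((1:ℝ)/2) - 1| = 1/2 := by rw [abs_of_nonpos] <;> norm_num
  rw [h0, h1, h2, h3] at key
  have hle := le_max_left
    ((a:ℝ) * (u * 1 + (1-u) * (1/2)) + b * (v * 1 + (1-v) * (1/2)))
    ((a:ℝ) * (u * 0 + (1-u) * (1/2)) + b * (v * 0 + (1-v) * (1/2)))
  have := lt_of_le_of_lt hle key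
  nlinarith [this]

/-- `W` on a constant multiset returns that constant. -/
lemma Wconst (hmech : ValidMechOrd ρ W) (r : ℝ) (hr : r = 0 ∨ r = 1)
    (a b : ℕ) (hab : 0 < a + b) :
    W (Multiset.replicate a r + Multiset.replicate b r) = r := by
  rw [← Multiset.replicate_add]
  have hne : Multiset.replicate (a+b) r ≠ 0 := by
    intro h
    have := congr_arg Multiset.card h
    simp at this
    omega
  have hmem := hmech.2 _ hne
    (fun q hq => by rw [Multiset.eq_of_mem_replicate hq]; exact hr)
  exact Multiset.eq_of_mem_replicate hmem

end Core

/-- Any ordinal mechanism with distortion strictly smaller than 7 must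
choose alternative 1 as the winner whenever `ℓ` groups are represented by 0 and `ℓ+1`
groups are represented by 1, for every `ℓ ≥ 1`. -/
theorem ordinal_majority_wins
    (ρ : ℝ → ℝ) (W : Multiset ℝ → ℝ) (hmech : ValidMechOrd ρ W)
    (hdist : ∀ (n : ℕ), 0 < n → ∀ frac pa pb : Fin n → ℝ,
      ValidPlacementOrd frac pa pb →
      max (swOrd frac pa pb 0) (swOrd frac pa pb 1) <
        7 * swOrd frac pa pb (winOrd ρ W frac)) :
    ∀ ℓ : ℕ, 1 ≤ ℓ →
      W (Multiset.replicate ℓ (0 : ℝ) + Multiset.replicate (ℓ + 1) (1 : ℝ)) = 1 := by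
  obtain ⟨hρ, hW⟩ := hmech
  have hρ0 : ρ 0 = 1 := by
    rcases hρ 0 le_rfl zero_le_one with h | h
    · exfalso
      have hw : W (Multiset.replicate 1 (ρ 0) + Multiset.replicate 1 (ρ 0)) = 0 := by
        rw [h]; exact Wconst ρ W ⟨hρ, hW⟩ 0 (Or.inl rfl) 1 1 (by norm_num)
      have := D0 ρ W hdist 1 1 (by norm_num) 0 0 le_rfl zero_le_one le_rfl zero_le_one hw
      norm_num at this
    · exact h
  have hρ1 : ρ 1 = 0 := by
    rcases hρ 1 zero_le_one le_rfl with h | h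
    · exact h
    · exfalso
      have hw : W (Multiset.replicate 1 (ρ 1) + Multiset.replicate 1 (ρ 1)) = 1 := by
        rw [h]; exact Wconst ρ W ⟨hρ, hW⟩ 1 (Or.inr rfl) 1 1 (by norm_num)
      have := D1 ρ W hdist 1 1 (by norm_num) 1 1 zero_le_one le_rfl zero_le_one le_rfl hw
      norm_num at this
  have Wmem : ∀ a b : ℕ, 0 < a + b →
      (W (Multiset.replicate a (0:ℝ) + Multiset.replicate b 1) = 0 ∨
       W (Multiset.replicate a (0:ℝ) + Multiset.replicate b 1) = 1) := by
    intro a b hab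
    have hne : Multiset.replicate a (0:ℝ) + Multiset.replicate b 1 ≠ 0 := by
      intro h
      have := congr_arg Multiset.card h
      simp at this
      omega
    have helts : ∀ q ∈ Multiset.replicate a (0:ℝ) + Multiset.replicate b 1,
        q = 0 ∨ q = 1 := by
      intro q hq
      rcases Multiset.mem_add.1 hq with h | h
      · exact Or.inl (Multiset.eq_of_mem_replicate h)
      · exact Or.inr (Multiset.eq_of_mem_replicate h)
    exact helts _ (hW _ hne helts)
  intro ℓ hℓ
  induction ℓ, hℓ using Nat.le_induction with
  | base =>
    rcases Wmem 1 2 (by norm_num) with h0 | h1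
    · exfalso
      rcases hρ (3/4) (by norm_num) (by norm_num) with hc | hc
      · have hw : W (Multiset.replicate 1 (ρ (3/4)) + Multiset.replicate 2 (ρ 0)) = 0 := by
          rw [hc, hρ0]; exact h0
        have := D0 ρ W hdist 1 2 (by norm_num) (3/4) 0 (by norm_num) (by norm_num)
          le_rfl zero_le_one hw
        norm_num at this
      · have hw : W (Multiset.replicate 1 (ρ (3/4)) + Multiset.replicate 1 (ρ (3/4))) = 1 := by
          rw [hc]; exact Wconst ρ W ⟨hρ, hW⟩ 1 (Or.inr rfl) 1 1 (by norm_num)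
        have := D1 ρ W hdist 1 1 (by norm_num) (3/4) (3/4) (by norm_num) (by norm_num)
          (by norm_num) (by norm_num) hw
        norm_num at this
    · exact h1
  | succ n hn ih =>
    rcases Wmem (n+1) (n+1+1) (by omega) with h0 | h1
    · exfalso
      have hden : (4*(n:ℝ)+4) ≠ 0 := by positivity
      set c : ℝ := (2*(n:ℝ)+3)/(4*(n:ℝ)+4) with hcdef
      have hc0 : 0 ≤ c := by positivity
      have hc1 : c ≤ 1 := by
        rw [hcdef, div_le_one (by positivity)]
        have : (0:ℝ) ≤ (n:ℝ) := Nat.cast_nonneg n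
        linarith
      rcases hρ c hc0 hc1 with hc | hc
      · have hw : W (Multiset.replicate (n+1) (ρ c) + Multiset.replicate (n+1+1) (ρ 0)) = 0 := by
          rw [hc, hρ0]; exact h0
        have hlt := D0 ρ W hdist (n+1) (n+1+1) (by omega) c 0 hc0 hc1 le_rfl zero_le_one hw
        have heq : ((n+1:ℕ):ℝ) * (1 - 4*c) + ((n+1+1:ℕ):ℝ) * (1 - 4*0) = 0 := by
          rw [hcdef]
          push_cast
          field_simp
          ring
        linarith
      · have hw : W (Multiset.replicate n (ρ 1) + Multiset.replicate (n+1) (ρ c)) = 1 := by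
          rw [hc, hρ1]; exact ih
        have hlt := D1 ρ W hdist n (n+1) (by omega) 1 c zero_le_one le_rfl hc0 hc1 hw
        have heq : ((n:ℕ):ℝ) * (4*1 - 3) + ((n+1:ℕ):ℝ) * (4*c - 3) = 0 := by
          rw [hcdef]
          push_cast
          field_simp
          ring
        linarith
    · exact h1
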